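/- Let n ≥ 2, let x_1 < ⋯ < x_n be real and m_1, …, m_n > 0, set l_k = x_{k+1} − x_k, and for 0 ≤ k ≤ n−1 let a^{(2k+1)}(z) = G_n(z) L_{n−1} G_{n−1}(z) ⋯ G_{n−k+1}(z) L_{n−k} G_{n−k}(z) (the product of the leftmost 2k+1 factors of the transition matrix), where L_j = [[1, l_j, l_j²/2],[0,1,l_j],[0,0,1]] and G_j(z) = [[1,0,0],[0,1,0],[−2 m_j z,0,1]]. Then for 1 ≤ k ≤ n−1, the entrywise polynomial degrees of a^{(2k+1)}(z) are: degree k for the (1,1) and (2,1) entries, degree k−1 for the (1,2), (1,3), (2,2), (2,3) entries, degree k+1 for the (3,1) entry, and degree k for the (3,2) and (3,3) entries. Moreover, if (p_k(z), q_k(z), r_k(z))ᵗ = L_{n−k−1} G_{n−k−1}(z) ⋯ L_1 G_1(z) (1,0,0)ᵗ for 0 ≤ k ≤ n−2 (and (p_{n−1}, q_{n−1}, r_{n−1}) = (1,0,0)), then p_k has degree n−k−1, and for 0 ≤ k ≤ n−2 both q_k and r_k have degree n−k−1. -/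
import Mathlib


open Polynomial Matrix

/-- The transfer matrix `L_k` of the discrete cubic string (with gap `l`). -/
noncomputable def Lmat (l : ℝ) : Matrix (Fin 3) (Fin 3) (Polynomial ℝ) :=
  !![1, Polynomial.C l, Polynomial.C (l ^ 2 / 2);
     0, 1, Polynomial.C l;
     0, 0, 1]

/-- The transfer matrix `G_k(z)` of the discrete cubic string (with mass `m`). -/
noncomputable def Gmat (m : ℝ) : Matrix (Fin 3) (Fin 3) (Polynomial ℝ) :=
  !![1, 0, 0;
     0, 1, 0;
     Polynomial.C (-2 * m) * Polynomial.X, 0, 1]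

/-- The transition matrix `S(z) = G_n(z) L_{n−1} G_{n−1}(z) ⋯ L_1 G_1(z)` of the
discrete cubic string with masses `m 1, …, m n` and gaps `l 1, …, l (n−1)`. -/
noncomputable def transMat (m l : ℕ → ℝ) : ℕ → Matrix (Fin 3) (Fin 3) (Polynomial ℝ)
  | 0 => 1
  | 1 => Gmat (m 1)
  | (k + 2) => Gmat (m (k + 2)) * Lmat (l (k + 1)) * transMat m l (k + 1)

/-- `aMat m l n k` is `a^{(2k+1)}(z) = G_n(z) L_{n−1} G_{n−1}(z) ⋯ L_{n−k} G_{n−k}(z)`,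
the product of the leftmost `2k+1` factors of the transition matrix. -/
noncomputable def aMat (m l : ℕ → ℝ) (n : ℕ) : ℕ → Matrix (Fin 3) (Fin 3) (Polynomial ℝ)
  | 0 => Gmat (m n)
  | (k + 1) => aMat m l n k * Lmat (l (n - (k + 1))) * Gmat (m (n - (k + 1)))

/-- degree ≤ d and coefficient at d has strictly the sign of s -/
def Pd (d : ℕ) (s : ℝ) (p : Polynomial ℝ) : Prop := p.natDegree ≤ d ∧ 0 < s * p.coeff d
/-- degree ≤ d and coefficient at d weakly has the sign of s -/
def Wd (d : ℕ) (s : ℝ) (p : Polynomial ℝ) : Prop := p.natDegree ≤ d ∧ 0 ≤ s * p.coeff d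

section PdWd
variable {d e : ℕ} {s t c : ℝ} {p q : Polynomial ℝ}

lemma Pd.wd (h : Pd d s p) : Wd d s p := ⟨h.1, h.2.le⟩

lemma Pd.natDegree_eq (h : Pd d s p) : p.natDegree = d := by
  refine le_antisymm h.1 (Polynomial.le_natDegree_of_ne_zero ?_)
  intro hc
  have := h.2
  rw [hc, mul_zero] at this
  exact lt_irrefl 0 this

lemma Wd.of_lt (h : p.natDegree ≤ d) (hde : d < e) : Wd e s p := by
  refine ⟨h.trans hde.le, ?_⟩
  rw [Polynomial.coeff_eq_zero_of_natDegree_lt (lt_of_le_of_lt h hde), mul_zero]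

lemma Pd.add_wd (h : Pd d s p) (h' : Wd d s q) : Pd d s (p + q) := by
  refine ⟨(Polynomial.natDegree_add_le p q).trans (max_le h.1 h'.1), ?_⟩
  rw [Polynomial.coeff_add, mul_add]
  exact add_pos_of_pos_of_nonneg h.2 h'.2

lemma Wd.add_pd (h' : Wd d s p) (h : Pd d s q) : Pd d s (p + q) := by
  rw [add_comm]; exact h.add_wd h'

lemma Wd.add (h : Wd d s p) (h' : Wd d s q) : Wd d s (p + q) := by
  refine ⟨(Polynomial.natDegree_add_le p q).trans (max_le h.1 h'.1), ?_⟩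
  rw [Polynomial.coeff_add, mul_add]
  exact add_nonneg h.2 h'.2

lemma Pd.c_mul (hc : 0 < c) (h : Pd d s p) : Pd d s (Polynomial.C c * p) := by
  refine ⟨(Polynomial.natDegree_C_mul_le c p).trans h.1, ?_⟩
  rw [Polynomial.coeff_C_mul]
  nlinarith [h.2]

lemma Wd.c_mul (hc : 0 < c) (h : Wd d s p) : Wd d s (Polynomial.C c * p) := by
  refine ⟨(Polynomial.natDegree_C_mul_le c p).trans h.1, ?_⟩
  rw [Polynomial.coeff_C_mul]
  nlinarith [h.2]

lemma Pd.cx_mul (hc : c < 0) (h : Pd d s p) :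
    Pd (d+1) (-s) (Polynomial.C c * Polynomial.X * p) := by
  have h1 : (Polynomial.C c * Polynomial.X).natDegree ≤ 1 := by compute_degree
  have h2 := h.1
  constructor
  · refine (Polynomial.natDegree_mul_le).trans ?_
    omega
  · rw [mul_assoc, Polynomial.coeff_C_mul, Polynomial.coeff_X_mul]
    nlinarith [h.2]

lemma Wd.cx_mul (hc : c < 0) (h : Wd d s p) :
    Wd (d+1) (-s) (Polynomial.C c * Polynomial.X * p) := by
  have h1 : (Polynomial.C c * Polynomial.X).natDegree ≤ 1 := by compute_degree
  have h2 := h.1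
  constructor
  · refine (Polynomial.natDegree_mul_le).trans ?_
    omega
  · rw [mul_assoc, Polynomial.coeff_C_mul, Polynomial.coeff_X_mul]
    nlinarith [h.2]

lemma Pd_one : Pd 0 1 (1 : Polynomial ℝ) := by constructor <;> simp

lemma Wd_zero : Wd d s (0 : Polynomial ℝ) := by constructor <;> simp

lemma Pd_CX (hc : c < 0) : Pd 1 (-1) (Polynomial.C c * Polynomial.X) := by
  have := Pd.cx_mul (p := (1:Polynomial ℝ)) (d := 0) (s := 1) hc Pd_one
  simpa using this

end PdWd

lemma mul_L_G (A : Matrix (Fin 3) (Fin 3) (Polynomial ℝ)) (l c : ℝ) (i : Fin 3) :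
    (A * Lmat l * Gmat c) i 0
      = A i 0 + Polynomial.C (-2*c) * Polynomial.X *
          (Polynomial.C (l^2/2) * A i 0 + Polynomial.C l * A i 1 + A i 2) ∧
    (A * Lmat l * Gmat c) i 1 = Polynomial.C l * A i 0 + A i 1 ∧
    (A * Lmat l * Gmat c) i 2
      = Polynomial.C (l^2/2) * A i 0 + Polynomial.C l * A i 1 + A i 2 := by
  refine ⟨?_, ?_, ?_⟩ <;>
    simp [Lmat, Gmat, Matrix.mul_apply, Fin.sum_univ_three] <;> ring

lemma G_L_mul (M : Matrix (Fin 3) (Fin 3) (Polynomial ℝ)) (c l : ℝ) :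
    (Gmat c * Lmat l * M) 0 0
      = M 0 0 + Polynomial.C l * M 1 0 + Polynomial.C (l^2/2) * M 2 0 ∧
    (Gmat c * Lmat l * M) 1 0 = M 1 0 + Polynomial.C l * M 2 0 ∧
    (Gmat c * Lmat l * M) 2 0
      = Polynomial.C (-2*c) * Polynomial.X *
          (M 0 0 + Polynomial.C l * M 1 0 + Polynomial.C (l^2/2) * M 2 0) + M 2 0 := by
  refine ⟨?_, ?_, ?_⟩ <;>
    simp [Lmat, Gmat, Matrix.mul_apply, Fin.sum_univ_three] <;> ring

lemma Lcol_mul (M : Matrix (Fin 3) (Fin 3) (Polynomial ℝ)) (l : ℝ) :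
    (Lmat l * M) 0 0 = M 0 0 + Polynomial.C l * M 1 0 + Polynomial.C (l^2/2) * M 2 0 ∧
    (Lmat l * M) 1 0 = M 1 0 + Polynomial.C l * M 2 0 ∧
    (Lmat l * M) 2 0 = M 2 0 := by
  refine ⟨?_, ?_, ?_⟩ <;>
    simp [Lmat, Matrix.mul_apply, Fin.sum_univ_three] <;> ring

/-- the inductive step for `aMat` -/
lemma stepA (A : Matrix (Fin 3) (Fin 3) (Polynomial ℝ)) (d : ℕ) (s : ℝ)
    (l c : ℝ) (hl : 0 < l) (hc : 0 < c)
    (h00 : Pd d s (A 0 0)) (h01 : Wd d s (A 0 1)) (h02 : Wd d s (A 0 2))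
    (h10 : Pd d s (A 1 0)) (h11 : Wd d s (A 1 1)) (h12 : Wd d s (A 1 2))
    (h20 : Pd (d+1) (-s) (A 2 0)) (h21 : Wd (d+1) (-s) (A 2 1))
    (h22 : Wd (d+1) (-s) (A 2 2)) :
    Pd (d+1) (-s) ((A * Lmat l * Gmat c) 0 0) ∧
    Pd d s ((A * Lmat l * Gmat c) 0 1) ∧
    Pd d s ((A * Lmat l * Gmat c) 0 2) ∧
    Pd (d+1) (-s) ((A * Lmat l * Gmat c) 1 0) ∧
    Pd d s ((A * Lmat l * Gmat c) 1 1) ∧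
    Pd d s ((A * Lmat l * Gmat c) 1 2) ∧
    Pd (d+2) s ((A * Lmat l * Gmat c) 2 0) ∧
    Pd (d+1) (-s) ((A * Lmat l * Gmat c) 2 1) ∧
    Pd (d+1) (-s) ((A * Lmat l * Gmat c) 2 2) := by
  have hc2 : -2*c < 0 := by linarith
  have hl2 : 0 < l^2/2 := by positivity
  obtain ⟨e00, e01, e02⟩ := mul_L_G A l c 0
  obtain ⟨e10, e11, e12⟩ := mul_L_G A l c 1
  obtain ⟨e20, e21, e22⟩ := mul_L_G A l c 2
  have B0 : Pd d s (Polynomial.C (l^2/2) * A 0 0 + Polynomial.C l * A 0 1 + A 0 2) :=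
    ((Pd.c_mul hl2 h00).add_wd (Wd.c_mul hl h01)).add_wd h02
  have B1 : Pd d s (Polynomial.C (l^2/2) * A 1 0 + Polynomial.C l * A 1 1 + A 1 2) :=
    ((Pd.c_mul hl2 h10).add_wd (Wd.c_mul hl h11)).add_wd h12
  have B2 : Pd (d+1) (-s) (Polynomial.C (l^2/2) * A 2 0 + Polynomial.C l * A 2 1 + A 2 2) :=
    ((Pd.c_mul hl2 h20).add_wd (Wd.c_mul hl h21)).add_wd h22
  refine ⟨?_, ?_, ?_, ?_, ?_, ?_, ?_, ?_, ?_⟩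
  · rw [e00]; exact (Wd.of_lt h00.1 (by omega)).add_pd (B0.cx_mul hc2)
  · rw [e01]; exact (Pd.c_mul hl h00).add_wd h01
  · rw [e02]; exact B0
  · rw [e10]; exact (Wd.of_lt h10.1 (by omega)).add_pd (B1.cx_mul hc2)
  · rw [e11]; exact (Pd.c_mul hl h10).add_wd h11
  · rw [e12]; exact B1
  · rw [e20]
    have h := B2.cx_mul hc2
    rw [neg_neg] at h
    exact (Wd.of_lt h20.1 (by omega)).add_pd h
  · rw [e21]; exact (Pd.c_mul hl h20).add_wd h21
  · rw [e22]; exact B2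

/-- the base case `k = 1` for `aMat` -/
lemma baseA (l c c' : ℝ) (hl : 0 < l) (hc : 0 < c) (hc' : 0 < c') :
    Pd 1 (-1) ((Gmat c' * Lmat l * Gmat c) 0 0) ∧
    Pd 0 1 ((Gmat c' * Lmat l * Gmat c) 0 1) ∧
    Pd 0 1 ((Gmat c' * Lmat l * Gmat c) 0 2) ∧
    Pd 1 (-1) ((Gmat c' * Lmat l * Gmat c) 1 0) ∧
    Pd 0 1 ((Gmat c' * Lmat l * Gmat c) 1 1) ∧
    Pd 0 1 ((Gmat c' * Lmat l * Gmat c) 1 2) ∧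
    Pd 2 1 ((Gmat c' * Lmat l * Gmat c) 2 0) ∧
    Pd 1 (-1) ((Gmat c' * Lmat l * Gmat c) 2 1) ∧
    Pd 1 (-1) ((Gmat c' * Lmat l * Gmat c) 2 2) := by
  have hc2 : -2*c < 0 := by linarith
  have hc'2 : -2*c' < 0 := by linarith
  have hl2 : 0 < l^2/2 := by positivity
  obtain ⟨e00, e01, e02⟩ := mul_L_G (Gmat c') l c 0
  obtain ⟨e10, e11, e12⟩ := mul_L_G (Gmat c') l c 1
  obtain ⟨e20, e21, e22⟩ := mul_L_G (Gmat c') l c 2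
  have g00 : Gmat c' 0 0 = 1 := rfl
  have g01 : Gmat c' 0 1 = 0 := rfl
  have g02 : Gmat c' 0 2 = 0 := rfl
  have g10 : Gmat c' 1 0 = 0 := rfl
  have g11 : Gmat c' 1 1 = 1 := rfl
  have g12 : Gmat c' 1 2 = 0 := rfl
  have g20 : Gmat c' 2 0 = Polynomial.C (-2*c') * Polynomial.X := rfl
  have g21 : Gmat c' 2 1 = 0 := rfl
  have g22 : Gmat c' 2 2 = 1 := rfl
  simp only [g00, g01, g02, g10, g11, g12, g20, g21, g22] at e00 e01 e02 e10 e11 e12 e20 e21 e22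
  have B0 : Pd 0 1 (Polynomial.C (l^2/2) * 1 + Polynomial.C l * 0 + 0) :=
    ((Pd.c_mul hl2 Pd_one).add_wd (Wd.c_mul hl Wd_zero)).add_wd Wd_zero
  have B1 : Pd 0 1 (Polynomial.C (l^2/2) * 0 + Polynomial.C l * 1 + 0) :=
    (((Wd.c_mul hl2 Wd_zero).add_pd (Pd.c_mul hl Pd_one))).add_wd Wd_zero
  have hCX : Pd 1 (-1) (Polynomial.C (-2*c') * Polynomial.X) := Pd_CX hc'2
  have B2 : Pd 1 (-1)
      (Polynomial.C (l^2/2) * (Polynomial.C (-2*c') * Polynomial.X) + Polynomial.C l * 0 + 1) :=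
    ((Pd.c_mul hl2 hCX).add_wd (Wd.c_mul hl Wd_zero)).add_wd
      (Wd.of_lt Polynomial.natDegree_one.le (by omega))
  refine ⟨?_, ?_, ?_, ?_, ?_, ?_, ?_, ?_, ?_⟩
  · rw [e00]
    have h := B0.cx_mul hc2
    exact (Wd.of_lt Pd_one.1 (by omega)).add_pd h
  · rw [e01]; exact (Pd.c_mul hl Pd_one).add_wd Wd_zero
  · rw [e02]; exact B0
  · rw [e10]; exact Wd_zero.add_pd (B1.cx_mul hc2)
  · rw [e11]; exact (Wd.c_mul hl Wd_zero).add_pd Pd_one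
  · rw [e12]; exact B1
  · rw [e20]
    have h := B2.cx_mul hc2
    rw [neg_neg] at h
    exact (Wd.of_lt hCX.1 (by omega)).add_pd h
  · rw [e21]; exact (Pd.c_mul hl hCX).add_wd Wd_zero
  · rw [e22]; exact B2

/-- **Degree count for `a^{(2k+1)}(z)` and for `(p_k, q_k, r_k)`**
(Lemma on degrees for the discrete cubic string).  Matrix indices are 0-based,
so e.g. the `(3,1)` entry of the paper is the `(2,0)` entry here.  The vector
`(p_k, q_k, r_k)ᵗ = L_{n−k−1} G_{n−k−1}(z) ⋯ L_1 G_1(z) (1,0,0)ᵗ` (equal to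
`(1,0,0)ᵗ` when `k = n−1`, since the first column of `L_0⋯` reduces to it). -/
theorem stmt9 (n : ℕ) (hn : 2 ≤ n) (x m : ℕ → ℝ)
    (hx : ∀ i, 1 ≤ i → i < n → x i < x (i + 1))
    (hm : ∀ i, 1 ≤ i → i ≤ n → 0 < m i)
    (l : ℕ → ℝ) (hl : ∀ k, l k = x (k + 1) - x k)
    (pqr : ℕ → Fin 3 → Polynomial ℝ)
    (hpqr : ∀ k, pqr k =
      (Lmat (l (n - k - 1)) * transMat m l (n - k - 1)).mulVec ![1, 0, 0]) :
    (∀ k, 1 ≤ k → k ≤ n - 1 →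
      ((aMat m l n k 0 0).natDegree = k ∧
       (aMat m l n k 1 0).natDegree = k ∧
       (aMat m l n k 0 1).natDegree = k - 1 ∧
       (aMat m l n k 0 2).natDegree = k - 1 ∧
       (aMat m l n k 1 1).natDegree = k - 1 ∧
       (aMat m l n k 1 2).natDegree = k - 1 ∧
       (aMat m l n k 2 0).natDegree = k + 1 ∧
       (aMat m l n k 2 1).natDegree = k ∧
       (aMat m l n k 2 2).natDegree = k)) ∧
    (∀ k ≤ n - 1, (pqr k 0).natDegree = n - k - 1) ∧
    (∀ k ≤ n - 2, (pqr k 1).natDegree = n - k - 1 ∧ (pqr k 2).natDegree = n - k - 1) := by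
  have hlpos : ∀ i, 1 ≤ i → i < n → 0 < l i := by
    intro i h1 h2
    rw [hl]
    linarith [hx i h1 h2]
  -- invariant for aMat
  have keyA : ∀ k, 1 ≤ k → k ≤ n - 1 → ∃ s : ℝ,
      Pd k s (aMat m l n k 0 0) ∧ Pd (k-1) (-s) (aMat m l n k 0 1) ∧
      Pd (k-1) (-s) (aMat m l n k 0 2) ∧ Pd k s (aMat m l n k 1 0) ∧
      Pd (k-1) (-s) (aMat m l n k 1 1) ∧ Pd (k-1) (-s) (aMat m l n k 1 2) ∧
      Pd (k+1) (-s) (aMat m l n k 2 0) ∧ Pd k s (aMat m l n k 2 1) ∧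
      Pd k s (aMat m l n k 2 2) := by
    intro k hk1
    induction k, hk1 using Nat.le_induction with
    | base =>
      intro hkn
      refine ⟨-1, ?_⟩
      have e : aMat m l n 1 = Gmat (m n) * Lmat (l (n-1)) * Gmat (m (n-1)) := rfl
      have h := baseA (l (n-1)) (m (n-1)) (m n)
        (hlpos (n-1) (by omega) (by omega))
        (hm (n-1) (by omega) (by omega)) (hm n (by omega) (by omega))
      rw [e]
      simpa using h
    | succ k hk ih =>
      intro hkn
      obtain ⟨s, h00, h01, h02, h10, h11, h12, h20, h21, h22⟩ := ih (by omega)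
      have e : aMat m l n (k+1)
          = aMat m l n k * Lmat (l (n - (k+1))) * Gmat (m (n - (k+1))) := rfl
      have hli : 0 < l (n - (k+1)) := hlpos _ (by omega) (by omega)
      have hmi : 0 < m (n - (k+1)) := hm _ (by omega) (by omega)
      have h := stepA (aMat m l n k) k s _ _ hli hmi h00
        (Wd.of_lt h01.1 (by omega)) (Wd.of_lt h02.1 (by omega)) h10
        (Wd.of_lt h11.1 (by omega)) (Wd.of_lt h12.1 (by omega)) h20
        (Wd.of_lt h21.1 (by omega)) (Wd.of_lt h22.1 (by omega))
      obtain ⟨n00, n01, n02, n10, n11, n12, n20, n21, n22⟩ := h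
      refine ⟨-s, ?_, ?_, ?_, ?_, ?_, ?_, ?_, ?_, ?_⟩ <;> rw [e] <;>
        try simp only [Nat.add_sub_cancel, neg_neg]
      exacts [n00, n01, n02, n10, n11, n12, n20, n21, n22]
  -- invariant for the first column of transMat
  have keyT : ∀ j, 1 ≤ j → j ≤ n - 1 → ∃ s : ℝ,
      Pd (j-1) s (transMat m l j 0 0) ∧ Wd (j-1) s (transMat m l j 1 0) ∧
      Pd j (-s) (transMat m l j 2 0) := by
    intro j hj1
    induction j, hj1 using Nat.le_induction with
    | base =>
      intro hjn
      refine ⟨1, ?_, ?_, ?_⟩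
      · have e : transMat m l 1 0 0 = 1 := rfl
        rw [e]; exact Pd_one
      · have e : transMat m l 1 1 0 = 0 := rfl
        rw [e]; exact Wd_zero
      · have e : transMat m l 1 2 0 = Polynomial.C (-2 * m 1) * Polynomial.X := rfl
        rw [e]
        exact Pd_CX (by have := hm 1 le_rfl (by omega); linarith)
    | succ j hj ih =>
      intro hjn
      obtain ⟨s, hu0, hu1, hu2⟩ := ih (by omega)
      obtain ⟨j', rfl⟩ : ∃ j', j = j' + 1 := ⟨j - 1, by omega⟩
      simp only [Nat.add_sub_cancel] at hu0 hu1 hu2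
      have e : transMat m l (j' + 1 + 1)
          = Gmat (m (j' + 2)) * Lmat (l (j' + 1)) * transMat m l (j' + 1) := rfl
      obtain ⟨e0, e1, e2⟩ := G_L_mul (transMat m l (j' + 1)) (m (j' + 2)) (l (j' + 1))
      have hli : 0 < l (j' + 1) := hlpos _ (by omega) (by omega)
      have hmi : 0 < m (j' + 2) := hm _ (by omega) (by omega)
      have hl2 : 0 < (l (j' + 1))^2/2 := by positivity
      have hc2 : -2 * m (j' + 2) < 0 := by linarith
      have hS : Pd (j' + 1) (-s) (transMat m l (j'+1) 0 0
          + Polynomial.C (l (j'+1)) * transMat m l (j'+1) 1 0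
          + Polynomial.C ((l (j'+1))^2/2) * transMat m l (j'+1) 2 0) :=
        ((Wd.of_lt hu0.1 (by omega)).add
          (Wd.of_lt (Wd.c_mul hli hu1).1 (by omega))).add_pd (Pd.c_mul hl2 hu2)
      refine ⟨-s, ?_, ?_, ?_⟩ <;> rw [e] <;> try simp only [Nat.add_sub_cancel, neg_neg]
      · rw [e0]; exact hS
      · rw [e1]
        exact ((Wd.of_lt hu1.1 (by omega)).add_pd (Pd.c_mul hli hu2)).wd
      · rw [e2]
        have h := hS.cx_mul hc2
        rw [neg_neg] at h
        exact h.add_wd (Wd.of_lt hu2.1 (by omega))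
  -- evaluating mulVec on the first basis vector
  have hmv : ∀ (A : Matrix (Fin 3) (Fin 3) (Polynomial ℝ)) (i : Fin 3),
      A.mulVec ![1, 0, 0] i = A i 0 := by
    intro A i
    simp [Matrix.mulVec, dotProduct, Fin.sum_univ_three]
  -- degrees of pqr for k ≤ n - 2
  have keyP : ∀ k ≤ n - 2,
      (pqr k 0).natDegree = n - k - 1 ∧ (pqr k 1).natDegree = n - k - 1 ∧
      (pqr k 2).natDegree = n - k - 1 := by
    intro k hk
    obtain ⟨s, hu0, hu1, hu2⟩ := keyT (n - k - 1) (by omega) (by omega)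
    obtain ⟨f0, f1, f2⟩ := Lcol_mul (transMat m l (n - k - 1)) (l (n - k - 1))
    have hlj : 0 < l (n - k - 1) := hlpos _ (by omega) (by omega)
    have hl2 : 0 < (l (n - k - 1))^2/2 := by positivity
    have hp0 : pqr k 0 = (Lmat (l (n - k - 1)) * transMat m l (n - k - 1)) 0 0 := by
      rw [hpqr k]; exact hmv _ _
    have hp1 : pqr k 1 = (Lmat (l (n - k - 1)) * transMat m l (n - k - 1)) 1 0 := by
      rw [hpqr k]; exact hmv _ _
    have hp2 : pqr k 2 = (Lmat (l (n - k - 1)) * transMat m l (n - k - 1)) 2 0 := by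
      rw [hpqr k]; exact hmv _ _
    refine ⟨?_, ?_, ?_⟩
    · rw [hp0, f0]
      exact (((Wd.of_lt hu0.1 (by omega)).add
        (Wd.of_lt (Wd.c_mul hlj hu1).1 (by omega))).add_pd (Pd.c_mul hl2 hu2)).natDegree_eq
    · rw [hp1, f1]
      exact ((Wd.of_lt hu1.1 (by omega)).add_pd (Pd.c_mul hlj hu2)).natDegree_eq
    · rw [hp2, f2]
      exact hu2.natDegree_eq
  refine ⟨?_, ?_, ?_⟩
  · intro k hk1 hk2
    obtain ⟨s, h00, h01, h02, h10, h11, h12, h20, h21, h22⟩ := keyA k hk1 hk2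
    exact ⟨h00.natDegree_eq, h10.natDegree_eq, h01.natDegree_eq, h02.natDegree_eq,
      h11.natDegree_eq, h12.natDegree_eq, h20.natDegree_eq, h21.natDegree_eq, h22.natDegree_eq⟩
  · intro k hk
    rcases le_or_gt k (n - 2) with h | h
    · exact (keyP k h).1
    · -- k = n - 1, so n - k - 1 = 0 and pqr k 0 = 1
      have hk' : n - k - 1 = 0 := by omega
      have : pqr k 0 = (Lmat (l (n - k - 1)) * transMat m l (n - k - 1)) 0 0 := by
        rw [hpqr k]; exact hmv _ _
      rw [hk'] at this
      have e1 : transMat m l 0 = 1 := rfl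
      rw [e1, mul_one] at this
      have e2 : Lmat (l 0) 0 0 = 1 := rfl
      rw [e2] at this
      rw [this, hk']
      exact Polynomial.natDegree_one
  · intro k hk
    exact ⟨(keyP k hk).2.1, (keyP k hk).2.2⟩
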